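/- Let Q be a qplex and let f : Q → Q be a bijective isometry of Q onto itself (i.e. ‖f(q₁) − f(q₂)‖ = ‖q₁ − q₂‖ for all q₁, q₂ ∈ Q). Then there exists an orthogonal d²×d² matrix R with Rc = c and RQ = Q such that f(q) = Rq for all q ∈ Q. Hence the symmetry group of Q coincides with its preservation group, the group of orthogonal matrices R satisfying Rc = c and RQ = Q. -/

import Mathlib

noncomputable section

/- Ambient space: ℝ^(d²) with the standard inner product. -/
abbrev V (d : ℕ) := EuclideanSpace ℝ (Fin (d^2))

/-- The standard inner product ⟨u, v⟩ = ∑ i, u i * v i. -/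
def ip {d : ℕ} (u v : V d) : ℝ := inner ℝ u v

/-- The barycenter c, with all entries equal to 1/d². -/
def cpt (d : ℕ) : V d := WithLp.toLp 2 (fun _ => 1/(d^2:ℝ))

/-- The hyperplane H = {u : ⟨u, c⟩ = 1/d²} of vectors whose entries sum to 1. -/
def Hs (d : ℕ) : Set (V d) := {u | ip u (cpt d) = 1/(d^2:ℝ)}

/-- The polar A* = {u ∈ H : ⟨u, v⟩ ≥ 1/(d(d+1)) for all v ∈ A}. -/
def polar (d : ℕ) (A : Set (V d)) : Set (V d) :=
  {u | u ∈ Hs d ∧ ∀ v ∈ A, 1/((d:ℝ)*((d:ℝ)+1)) ≤ ip u v}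

/-- cc(A): the closed convex hull of A. -/
def cc (d : ℕ) (A : Set (V d)) : Set (V d) := closure (convexHull ℝ A)

/-- The probability simplex Δ = {u ∈ H : u i ≥ 0 for all i}. -/
def probSimplex (d : ℕ) : Set (V d) := {u | u ∈ Hs d ∧ ∀ i, 0 ≤ u i}

/-- The basis distributions e_k, with e_k(i) = (δ_{ki} + 1/d)/(d+1). -/
def basisDist (d : ℕ) (k : Fin (d^2)) : V d :=
  WithLp.toLp 2 (fun i => ((if k = i then (1:ℝ) else 0) + 1/(d:ℝ)) / ((d:ℝ)+1))

/-- The basis simplex Δ_e: the convex hull of the basis distributions. -/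
def basisSimplex (d : ℕ) : Set (V d) := convexHull ℝ (Set.range (basisDist d))

/-- The out-ball B_o = {u ∈ H : ⟨u, u⟩ ≤ 2/(d(d+1))}. -/
def outBall (d : ℕ) : Set (V d) := {u | u ∈ Hs d ∧ ip u u ≤ 2/((d:ℝ)*((d:ℝ)+1))}

/-- The out-sphere S_o = {u ∈ H : ⟨u, u⟩ = 2/(d(d+1))}. -/
def outSphere (d : ℕ) : Set (V d) := {u | u ∈ Hs d ∧ ip u u = 2/((d:ℝ)*((d:ℝ)+1))}

/-- The in-ball B_i = {u ∈ H : ‖u − c‖² ≤ 1/(d²(d²−1))}. -/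
def inBall (d : ℕ) : Set (V d) :=
  {u | u ∈ Hs d ∧ ‖u - cpt d‖^2 ≤ 1/((d:ℝ)^2*((d:ℝ)^2-1))}

/-- The in-sphere S_i = {u ∈ H : ‖u − c‖² = 1/(d²(d²−1))}. -/
def inSphere (d : ℕ) : Set (V d) :=
  {u | u ∈ Hs d ∧ ‖u - cpt d‖^2 = 1/((d:ℝ)^2*((d:ℝ)^2-1))}

/-- The mid-ball B_m = {u ∈ H : ‖u − c‖² ≤ 1/(d²(d+1))}. -/
def midBall (d : ℕ) : Set (V d) :=
  {u | u ∈ Hs d ∧ ‖u - cpt d‖^2 ≤ 1/((d:ℝ)^2*((d:ℝ)+1))}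

/-- A germ: a subset of Δ whose pairwise inner products satisfy the
fundamental inequalities 1/(d(d+1)) ≤ ⟨p, s⟩ ≤ 2/(d(d+1)). -/
def IsGerm (d : ℕ) (G : Set (V d)) : Prop :=
  G ⊆ probSimplex d ∧
  ∀ p ∈ G, ∀ s ∈ G, 1/((d:ℝ)*((d:ℝ)+1)) ≤ ip p s ∧ ip p s ≤ 2/((d:ℝ)*((d:ℝ)+1))

/-- A qplex: a self-polar subset of Δ ∩ B_o. -/
def IsQplex (d : ℕ) (Q : Set (V d)) : Prop :=
  Q ⊆ probSimplex d ∩ outBall d ∧ Q = polar d Q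

/-- Action of a d²×d² matrix on a vector: (R u)(i) = ∑ j, R i j * u j. -/
def mvec (d : ℕ) (R : Matrix (Fin (d^2)) (Fin (d^2)) ℝ) (u : V d) : V d :=
  WithLp.toLp 2 (fun i => ∑ j, R i j * u j)

/-!
The barycenter `c` is the centroid of the basis distributions `e_k`, which belong to `Q` and lie
on the out-sphere, while all of `Q` lies in the out-ball around `c`. Writing `e_k = f q_k`, the
point `f c` is within the out-radius of every `e_k`, which forces `f c = c`. An isometry of a
subset of the hyperplane `H` fixing `c` preserves norms, hence inner products. As the `e_k` form
a basis, `f` then agrees on `Q` with the linear isometry sending `e_k` to `f e_k`, whose matrix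
is orthogonal.
-/
open Set Module
open scoped InnerProductSpace

section InnerProductSpace

variable {E F : Type*} [NormedAddCommGroup E] [InnerProductSpace ℝ E]
  [NormedAddCommGroup F] [InnerProductSpace ℝ F]

theorem real_inner_eq_of_norm_eq {u v u' v' : E} (hu : ‖u'‖ = ‖u‖) (hv : ‖v'‖ = ‖v‖)
    (huv : ‖u' - v'‖ = ‖u - v‖) : ⟪u', v'⟫_ℝ = ⟪u, v⟫_ℝ := by
  rw [real_inner_eq_norm_mul_self_add_norm_mul_self_sub_norm_sub_mul_self_div_two,
    real_inner_eq_norm_mul_self_add_norm_mul_self_sub_norm_sub_mul_self_div_two, hu, hv, huv]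

theorem norm_sq_eq_norm_sub_sq_add_norm_sq {u c : E} (h : ⟪u, c⟫_ℝ = ⟪c, c⟫_ℝ) :
    ‖u‖ ^ 2 = ‖u - c‖ ^ 2 + ‖c‖ ^ 2 := by
  rw [norm_sub_sq_real, h, real_inner_self_eq_norm_sq]
  ring

theorem real_inner_map_map_of_isometric_fixing {Q : Set E} {c : E} {f : E → E} (hc : c ∈ Q)
    (hfc : f c = c) (hf : MapsTo f Q Q) (hQ : ∀ q ∈ Q, ⟪q, c⟫_ℝ = ⟪c, c⟫_ℝ)
    (hiso : ∀ p ∈ Q, ∀ q ∈ Q, ‖f p - f q‖ = ‖p - q‖) :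
    ∀ p ∈ Q, ∀ q ∈ Q, ⟪f p, f q⟫_ℝ = ⟪p, q⟫_ℝ := by
  have hnorm : ∀ q ∈ Q, ‖f q‖ = ‖q‖ := fun q hq => by
    have h := norm_sq_eq_norm_sub_sq_add_norm_sq (hQ _ (hf hq))
    rw [← hfc, hiso q hq c hc, hfc, ← norm_sq_eq_norm_sub_sq_add_norm_sq (hQ q hq)] at h
    exact (sq_eq_sq₀ (norm_nonneg _) (norm_nonneg _)).1 h
  exact fun p hp q hq => real_inner_eq_of_norm_eq (hnorm p hp) (hnorm q hq) (hiso p hp q hq)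

/-- Parallel-axis identity: `∑ ‖x - p i‖² = n ‖x - c‖² + ∑ ‖p i - c‖²` when `c` is the centroid
of the `p i`. -/
theorem eq_of_norm_sub_sq_le_of_sum_sub_eq_zero {ι : Type*} [Fintype ι] [Nonempty ι]
    {p : ι → E} {c x : E} {r : ℝ} (hc : ∑ i, (p i - c) = 0) (hp : ∀ i, ‖p i - c‖ ^ 2 = r)
    (hx : ∀ i, ‖x - p i‖ ^ 2 ≤ r) : x = c := by
  have hsplit : ∀ i, ‖x - p i‖ ^ 2 = ‖x - c‖ ^ 2 - 2 * ⟪x - c, p i - c⟫_ℝ + r := by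
    intro i
    rw [← hp i, ← norm_sub_sq_real, sub_sub_sub_cancel_right]
  have hsum : ∑ i, ‖x - p i‖ ^ 2 = Fintype.card ι * ‖x - c‖ ^ 2 + Fintype.card ι * r := by
    simp only [hsplit, Finset.sum_add_distrib, Finset.sum_sub_distrib, ← Finset.mul_sum,
      ← inner_sum, hc, inner_zero_right, Finset.sum_const, Finset.card_univ, nsmul_eq_mul]
    ring
  have hle : ∑ i, ‖x - p i‖ ^ 2 ≤ Fintype.card ι * r := by
    simpa using Finset.sum_le_sum fun i (_ : i ∈ Finset.univ) => hx i
  have hcard : (0 : ℝ) < Fintype.card ι := by exact_mod_cast Fintype.card_pos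
  have : ‖x - c‖ ^ 2 ≤ 0 := by nlinarith
  exact sub_eq_zero.mp (norm_eq_zero.mp (by nlinarith [norm_nonneg (x - c)]))

theorem exists_linearIsometry_eqOn_of_inner_eq {ι : Type*} (b : Basis ι ℝ E) {S : Set E}
    (hb : ∀ i, b i ∈ S) {g : E → F} (hg : ∀ s ∈ S, ∀ t ∈ S, ⟪g s, g t⟫_ℝ = ⟪s, t⟫_ℝ) :
    ∃ L : E →ₗᵢ[ℝ] F, EqOn g L S := by
  set L₀ : E →ₗ[ℝ] F := b.constr ℝ (g ∘ b)
  have hL₀ : ∀ i, L₀ (b i) = g (b i) := fun i => b.constr_basis ℝ _ i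
  have hinner : ∀ u v, ⟪L₀ u, L₀ v⟫_ℝ = ⟪u, v⟫_ℝ := by
    have h := LinearMap.ext_basis (B := (innerₗ F).compl₁₂ L₀ L₀) (B' := innerₗ E) b b
      fun i j => by simpa [hL₀] using hg _ (hb i) _ (hb j)
    exact fun u v => by simpa using LinearMap.congr_fun₂ h u v
  refine ⟨L₀.isometryOfInner hinner, fun s hs => ?_⟩
  have hmixed : ∀ v, ⟪g s, L₀ v⟫_ℝ = ⟪s, v⟫_ℝ := by
    have h := b.ext (f₁ := (innerₗ F (g s)).comp L₀) (f₂ := innerₗ E s)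
      fun i => by simpa [hL₀] using hg _ hs _ (hb i)
    exact fun v => by simpa using LinearMap.congr_fun h v
  have : ‖g s - L₀ s‖ ^ 2 = 0 := by
    rw [norm_sub_sq_real, ← real_inner_self_eq_norm_sq, ← real_inner_self_eq_norm_sq, hmixed,
      hinner, hg s hs s hs]
    ring
  simpa [sub_eq_zero] using this

end InnerProductSpace

section Qplex

variable {d : ℕ}

theorem ip_eq_sum (u v : V d) : ip u v = ∑ i, u i * v i := by
  simp [ip, PiLp.inner_apply, mul_comm]

theorem ip_cpt (u : V d) : ip u (cpt d) = (∑ i, u i) / (d : ℝ) ^ 2 := by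
  simp only [ip_eq_sum, cpt, mul_one_div, Finset.sum_div]

theorem mem_Hs_iff (hd : d ≠ 0) {u : V d} : u ∈ Hs d ↔ ∑ i, u i = 1 := by
  have : (d : ℝ) ^ 2 ≠ 0 := by positivity
  rw [Hs, Set.mem_ofPred_eq, ip_cpt, div_left_inj' this]

theorem cpt_mem_Hs (hd : d ≠ 0) : cpt d ∈ Hs d := by
  rw [mem_Hs_iff hd]
  simp only [cpt, one_div, Finset.sum_const, Finset.card_univ, Fintype.card_fin, nsmul_eq_mul,
    Nat.cast_pow]
  field_simp

theorem ip_basisDist (u : V d) (k : Fin (d ^ 2)) :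
    ip u (basisDist d k) = (u k + (∑ i, u i) / d) / (d + 1) := by
  simp only [ip_eq_sum, basisDist, mul_div_assoc', mul_add, ← Finset.sum_div,
    Finset.sum_add_distrib, mul_ite, mul_one, mul_zero, Finset.sum_ite_eq, Finset.mem_univ,
    if_true]

theorem basisDist_mem_Hs (hd : d ≠ 0) (k : Fin (d ^ 2)) : basisDist d k ∈ Hs d := by
  rw [mem_Hs_iff hd]
  simp only [basisDist, ← Finset.sum_div, Finset.sum_add_distrib, Finset.sum_ite_eq,
    Finset.mem_univ, if_true, Finset.sum_const, Finset.card_univ, Fintype.card_fin, nsmul_eq_mul]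
  push_cast
  field_simp
  ring

theorem sum_basisDist (hd : d ≠ 0) : ∑ k, basisDist d k = (d ^ 2 : ℝ) • cpt d := by
  ext i
  simp only [WithLp.ofLp_sum, Finset.sum_apply, basisDist, cpt, ← Finset.sum_div,
    Finset.sum_add_distrib, Finset.sum_ite_eq', Finset.mem_univ, if_true, Finset.sum_const,
    Finset.card_univ, Fintype.card_fin, nsmul_eq_mul, WithLp.ofLp_smul, Pi.smul_apply,
    smul_eq_mul]
  push_cast
  field_simp
  ring

theorem single_eq_basisDist_sub_cpt (hd : d ≠ 0) (k : Fin (d ^ 2)) :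
    EuclideanSpace.single k 1 = ((d : ℝ) + 1) • basisDist d k - (d : ℝ) • cpt d := by
  ext i
  simp only [PiLp.single_apply, eq_comm, basisDist, one_div, cpt, PiLp.sub_apply,
    PiLp.smul_apply, smul_eq_mul]
  field_simp
  ring

theorem span_basisDist (hd : d ≠ 0) : Submodule.span ℝ (range (basisDist d)) = ⊤ := by
  have hc : cpt d ∈ Submodule.span ℝ (range (basisDist d)) := by
    have : cpt d = ((d : ℝ) ^ 2)⁻¹ • ∑ k, basisDist d k := by
      rw [sum_basisDist hd, smul_smul, inv_mul_cancel₀ (by positivity), one_smul]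
    rw [this]
    exact Submodule.smul_mem _ _ (Submodule.sum_mem _ fun k _ => Submodule.subset_span ⟨k, rfl⟩)
  rw [eq_top_iff, ← (EuclideanSpace.basisFun (Fin (d ^ 2)) ℝ).toBasis.span_eq, Submodule.span_le]
  rintro _ ⟨k, rfl⟩
  rw [OrthonormalBasis.coe_toBasis, EuclideanSpace.basisFun_apply, single_eq_basisDist_sub_cpt hd]
  exact Submodule.sub_mem _ (Submodule.smul_mem _ _ (Submodule.subset_span ⟨k, rfl⟩))
    (Submodule.smul_mem _ _ hc)

theorem sum_basisDist_sub_cpt (hd : d ≠ 0) : ∑ k, (basisDist d k - cpt d) = 0 := by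
  simp [Finset.sum_sub_distrib, sum_basisDist hd, ← Nat.cast_smul_eq_nsmul ℝ]

def basisDistBasis (hd : d ≠ 0) : Basis (Fin (d ^ 2)) ℝ (V d) :=
  basisOfTopLeSpanOfCardEqFinrank (basisDist d) (span_basisDist hd).ge (by simp)

@[simp]
theorem coe_basisDistBasis (hd : d ≠ 0) : ⇑(basisDistBasis hd) = basisDist d :=
  coe_basisOfTopLeSpanOfCardEqFinrank _ _ _

theorem inner_cpt_of_mem_Hs (hd : d ≠ 0) {u : V d} (hu : u ∈ Hs d) :
    ⟪u, cpt d⟫_ℝ = ⟪cpt d, cpt d⟫_ℝ :=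
  hu.trans (cpt_mem_Hs hd).symm

theorem norm_sub_cpt_sq (hd : d ≠ 0) {u : V d} (hu : u ∈ Hs d) :
    ‖u - cpt d‖ ^ 2 = ip u u - 1 / (d : ℝ) ^ 2 := by
  have hcc : ‖cpt d‖ ^ 2 = 1 / (d : ℝ) ^ 2 := by
    rw [← real_inner_self_eq_norm_sq]
    exact cpt_mem_Hs hd
  rw [ip, real_inner_self_eq_norm_sq,
    norm_sq_eq_norm_sub_sq_add_norm_sq (inner_cpt_of_mem_Hs hd hu), hcc]
  ring

theorem norm_basisDist_sub_cpt_sq (hd : d ≠ 0) (k : Fin (d ^ 2)) :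
    ‖basisDist d k - cpt d‖ ^ 2 = 2 / ((d : ℝ) * ((d : ℝ) + 1)) - 1 / (d : ℝ) ^ 2 := by
  rw [norm_sub_cpt_sq hd (basisDist_mem_Hs hd k), ip_basisDist,
    (mem_Hs_iff hd).1 (basisDist_mem_Hs hd k)]
  simp only [basisDist, if_true]
  field_simp
  ring

theorem mvec_eq_toEuclideanLin (R : Matrix (Fin (d ^ 2)) (Fin (d ^ 2)) ℝ) (u : V d) :
    mvec d R u = Matrix.toEuclideanLin R u :=
  rfl

theorem exists_mem_orthogonalGroup_mvec_eq (L : V d →ₗᵢ[ℝ] V d) :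
    ∃ R ∈ Matrix.orthogonalGroup (Fin (d ^ 2)) ℝ, ∀ u, mvec d R u = L u := by
  let b := EuclideanSpace.basisFun (Fin (d ^ 2)) ℝ
  let L' := L.toLinearIsometryEquiv rfl
  refine ⟨LinearMap.toMatrix b.toBasis b.toBasis L', L'.toMatrix_mem_unitaryGroup b b, fun u => ?_⟩
  rw [mvec_eq_toEuclideanLin, Matrix.toEuclideanLin_eq_toLin_orthonormal, Matrix.toLin_toMatrix]
  rfl

namespace IsQplex

variable {Q : Set (V d)}

theorem mem_Hs (hQ : IsQplex d Q) {q : V d} (hq : q ∈ Q) : q ∈ Hs d := (hQ.1 hq).1.1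

theorem cpt_mem (hd : d ≠ 0) (hQ : IsQplex d Q) : cpt d ∈ Q := by
  rw [hQ.2]
  refine ⟨cpt_mem_Hs hd, fun v hv => ?_⟩
  rw [ip, real_inner_comm, ← ip, hQ.mem_Hs hv]
  gcongr
  nlinarith

theorem basisDist_mem (hd : d ≠ 0) (hQ : IsQplex d Q) (k : Fin (d ^ 2)) : basisDist d k ∈ Q := by
  rw [hQ.2]
  refine ⟨basisDist_mem_Hs hd k, fun v hv => ?_⟩
  rw [ip, real_inner_comm, ← ip, ip_basisDist, (mem_Hs_iff hd).1 (hQ.mem_Hs hv)]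
  calc 1 / ((d : ℝ) * ((d : ℝ) + 1)) = (0 + 1 / (d : ℝ)) / ((d : ℝ) + 1) := by field_simp; simp
    _ ≤ _ := by gcongr; exact (hQ.1 hv).1.2 k

theorem norm_sub_cpt_sq_le (hd : d ≠ 0) (hQ : IsQplex d Q) {q : V d} (hq : q ∈ Q) :
    ‖q - cpt d‖ ^ 2 ≤ 2 / ((d : ℝ) * ((d : ℝ) + 1)) - 1 / (d : ℝ) ^ 2 := by
  rw [norm_sub_cpt_sq hd (hQ.mem_Hs hq)]
  linarith [(hQ.1 hq).2.2]

end IsQplex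

end Qplex

/-- every bijective isometry of a qplex onto itself is the
restriction of an orthogonal matrix fixing c and preserving Q. -/
theorem statement16 (d : ℕ) (hd : 2 ≤ d) (Q : Set (V d)) (hQ : IsQplex d Q)
    (f : V d → V d) (hbij : Set.BijOn f Q Q)
    (hiso : ∀ q₁ ∈ Q, ∀ q₂ ∈ Q, ‖f q₁ - f q₂‖ = ‖q₁ - q₂‖) :
    ∃ R : Matrix (Fin (d^2)) (Fin (d^2)) ℝ,
      R ∈ Matrix.orthogonalGroup (Fin (d^2)) ℝ ∧
      mvec d R (cpt d) = cpt d ∧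
      mvec d R '' Q = Q ∧
      ∀ q ∈ Q, f q = mvec d R q := by
  have hd0 : d ≠ 0 := by omega
  have hcQ := hQ.cpt_mem hd0
  have heQ := hQ.basisDist_mem hd0
  have hfc : f (cpt d) = cpt d := by
    have : Nonempty (Fin (d ^ 2)) := ⟨⟨0, by positivity⟩⟩
    refine eq_of_norm_sub_sq_le_of_sum_sub_eq_zero (p := basisDist d)
      (sum_basisDist_sub_cpt hd0) (norm_basisDist_sub_cpt_sq hd0) fun k => ?_
    obtain ⟨q, hq, hfq⟩ := hbij.surjOn (heQ k)
    rw [← hfq, hiso _ hcQ _ hq, norm_sub_rev]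
    exact hQ.norm_sub_cpt_sq_le hd0 hq
  obtain ⟨L, hL⟩ := exists_linearIsometry_eqOn_of_inner_eq (basisDistBasis hd0) (by simpa using heQ)
    (real_inner_map_map_of_isometric_fixing hcQ hfc hbij.mapsTo
      (fun q hq => inner_cpt_of_mem_Hs hd0 (hQ.mem_Hs hq)) hiso)
  obtain ⟨R, hR, hRL⟩ := exists_mem_orthogonalGroup_mvec_eq L
  have hfR : EqOn f (mvec d R) Q := fun q hq => by rw [hRL, hL hq]
  refine ⟨R, hR, ?_, ?_, hfR⟩
  · rw [← hfR hcQ, hfc]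
  · rw [← hfR.image_eq, hbij.image_eq]
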